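/- arXiv:2502.17515 — 3 statements merged into one kernel-verified Lean document; each statement's English description precedes it below -/
import Mathlib

section
/- For all real numbers a and b, setting p_a = 1/(1 + e^a) and p_b = 1/(1 + e^b), one has kl(p_a‖p_b) + kl(p_b‖p_a) ≤ (a − b)². -/
/-- Kullback–Leibler divergence between Bernoulli(p) and Bernoulli(q). -/
noncomputable def klBer (p q : ℝ) : ℝ :=
  p * Real.log (p / q) + (1 - p) * Real.log ((1 - p) / (1 - q))

/-! The symmetrised divergence is `(p - q) (logit p - logit q)`, and `1 / (1 + e^a)` is the
sigmoid of `-a`, whose logit is `-a`. So the sum equals `(σ(-a) - σ(-b)) (b - a)`, which is at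
most `(a - b)² / 4` because the sigmoid is `1/4`-Lipschitz (`σ' = σ (1 - σ) ≤ 1/4`). -/

open Real

lemma klBer_add_klBer_swap {p q : ℝ} (hp₀ : 0 < p) (hp₁ : p < 1) (hq₀ : 0 < q) (hq₁ : q < 1) :
    klBer p q + klBer q p = (p - q) * (log (p / (1 - p)) - log (q / (1 - q))) := by
  have hp' : 0 < 1 - p := sub_pos.2 hp₁
  have hq' : 0 < 1 - q := sub_pos.2 hq₁
  simp only [klBer, log_div hp₀.ne' hq₀.ne', log_div hq₀.ne' hp₀.ne', log_div hp'.ne' hq'.ne',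
    log_div hq'.ne' hp'.ne', log_div hp₀.ne' hp'.ne', log_div hq₀.ne' hq'.ne']
  ring

lemma log_sigmoid_div_one_sub_sigmoid (x : ℝ) : log (sigmoid x / (1 - sigmoid x)) = x := by
  rw [← sigmoid_neg, ← sigmoid_mul_rexp_neg, div_mul_cancel_left₀ (sigmoid_pos x).ne', exp_neg,
    inv_inv, log_exp]

lemma one_div_one_add_exp_eq_sigmoid_neg (x : ℝ) : 1 / (1 + exp x) = sigmoid (-x) := by
  rw [sigmoid_def, neg_neg, one_div]

lemma sigmoid_mul_one_sub_sigmoid_le (x : ℝ) : sigmoid x * (1 - sigmoid x) ≤ 1 / 4 := by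
  nlinarith [sq_nonneg (sigmoid x - 1 / 2)]

lemma lipschitzWith_sigmoid : LipschitzWith (1 / 4) sigmoid := by
  refine lipschitzWith_of_nnnorm_deriv_le differentiable_sigmoid fun x => ?_
  rw [← NNReal.coe_le_coe, coe_nnnorm, deriv_sigmoid, Real.norm_eq_abs,
    abs_of_nonneg (mul_nonneg (sigmoid_nonneg x) (sub_nonneg.2 (sigmoid_le_one x)))]
  simpa using sigmoid_mul_one_sub_sigmoid_le x

theorem kl_sum_le_sq (a b : ℝ) :
    klBer (1 / (1 + Real.exp a)) (1 / (1 + Real.exp b)) +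
      klBer (1 / (1 + Real.exp b)) (1 / (1 + Real.exp a)) ≤ (a - b) ^ 2 := by
  rw [one_div_one_add_exp_eq_sigmoid_neg, one_div_one_add_exp_eq_sigmoid_neg,
    klBer_add_klBer_swap (sigmoid_pos _) (sigmoid_lt_one _) (sigmoid_pos _) (sigmoid_lt_one _),
    log_sigmoid_div_one_sub_sigmoid, log_sigmoid_div_one_sub_sigmoid, neg_sub_neg]
  have hlip : |sigmoid (-a) - sigmoid (-b)| ≤ 1 / 4 * |b - a| := by
    have := lipschitzWith_sigmoid.dist_le_mul (-a) (-b)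
    rwa [Real.dist_eq, Real.dist_eq, neg_sub_neg, NNReal.coe_div, NNReal.coe_one,
      NNReal.coe_ofNat] at this
  calc (sigmoid (-a) - sigmoid (-b)) * (b - a)
      ≤ |sigmoid (-a) - sigmoid (-b)| * |b - a| := (le_abs_self _).trans (abs_mul _ _).le
    _ ≤ 1 / 4 * |b - a| * |b - a| := by gcongr
    _ ≤ (a - b) ^ 2 := by
      rw [mul_assoc, ← sq, sq_abs]
      nlinarith [sq_nonneg (a - b)]
end

section
/- Let L ≥ 0, B ≥ 0, κ > 0, and let x_1, …, x_N ∈ ℝ^d satisfy ‖x_i‖ ≤ 2L for all i and (1/N)·∑_{i=1}^N ⟨x_i, v⟩² ≥ κ‖v‖² for every v ∈ ℝ^d. Let y_1, …, y_N ∈ [0,1] and set γ = 1/(2 + e^{2LB} + e^{−2LB}). Then the empirical Bradley–Terry–Luce loss f(θ) = −(1/N)·∑_{i=1}^N ( y_i·log σ(⟨x_i, θ⟩) + (1 − y_i)·log(1 − σ(⟨x_i, θ⟩)) ) is strongly convex with modulus κγ on the closed ball {θ ∈ ℝ^d : ‖θ‖ ≤ B}. -/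
/-- The logistic sigmoid function. -/
noncomputable def sigmoid (z : ℝ) : ℝ := 1 / (1 + Real.exp (-z))

/-! The per-sample loss `z ↦ log (1 + exp z) - y z` has second derivative
`σ z (1 - σ z) = 1 / (2 + 2 cosh z)`, which is at least `γ = 1 / (2 + 2 cosh (2LB))` on
`|z| ≤ 2LB`, and by Cauchy–Schwarz every logit `⟪x i, θ⟫` with `‖θ‖ ≤ B` lies in that range.
Each sample therefore contributes the curvature `γ ⟪x i, a - b⟫²` along the segment `[a, b]`, and
the covariance bound turns their average into `κ γ ‖a - b‖²`. -/

open Real (log exp cosh)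
open Set

lemma sigmoid_eq_real_sigmoid : sigmoid = Real.sigmoid := funext fun _ => one_div _

noncomputable def logisticLoss (y z : ℝ) : ℝ := log (1 + exp z) - y * z

lemma log_sigmoid (z : ℝ) : log (Real.sigmoid z) = z - log (1 + exp z) := by
  have h : 1 + exp z = exp z * (1 + exp (-z)) := by
    rw [mul_add, ← Real.exp_add]; simp [add_comm]
  rw [Real.sigmoid_def, Real.log_inv, h, Real.log_mul (Real.exp_pos z).ne' (by positivity),
    Real.log_exp]
  ring

lemma log_one_sub_sigmoid (z : ℝ) : log (1 - Real.sigmoid z) = -log (1 + exp z) := by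
  rw [← Real.sigmoid_neg, Real.sigmoid_def, neg_neg, Real.log_inv]

lemma neg_log_likelihood_eq_logisticLoss (y z : ℝ) :
    -(y * log (sigmoid z) + (1 - y) * log (1 - sigmoid z)) = logisticLoss y z := by
  rw [sigmoid_eq_real_sigmoid, log_sigmoid, log_one_sub_sigmoid, logisticLoss]
  ring

lemma hasDerivAt_logisticLoss (y z : ℝ) :
    HasDerivAt (logisticLoss y) (Real.sigmoid z - y) z := by
  have h : exp z / (1 + exp z) = Real.sigmoid z := by
    rw [Real.sigmoid_def, Real.exp_neg]
    field_simp
    ring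
  have hderiv := (((Real.hasDerivAt_exp z).const_add 1).log (by positivity)).sub
    ((hasDerivAt_id z).const_mul y)
  rw [h, mul_one] at hderiv
  exact hderiv

lemma sigmoid_mul_one_sub_sigmoid (z : ℝ) :
    Real.sigmoid z * (1 - Real.sigmoid z) = 1 / (2 + 2 * cosh z) := by
  rw [← Real.sigmoid_neg, Real.sigmoid_def, Real.sigmoid_def, neg_neg, Real.cosh_eq]
  have : exp z * exp (-z) = 1 := by rw [← Real.exp_add]; simp
  field_simp
  linear_combination -this

lemma sigmoid_mul_one_sub_sigmoid_ge {z M : ℝ} (hz : |z| ≤ M) :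
    1 / (2 + 2 * cosh M) ≤ Real.sigmoid z * (1 - Real.sigmoid z) := by
  rw [sigmoid_mul_one_sub_sigmoid]
  gcongr
  exact Real.cosh_le_cosh.2 (hz.trans (le_abs_self M))

lemma strongConvexOn_of_hasDerivAt2 {D : Set ℝ} (hD : Convex ℝ D) {g g' g'' : ℝ → ℝ} {m : ℝ}
    (hg : ∀ z, HasDerivAt g (g' z) z) (hg' : ∀ z, HasDerivAt g' (g'' z) z)
    (hm : ∀ z ∈ D, m ≤ g'' z) : StrongConvexOn D m g := by
  have hq (z : ℝ) : HasDerivAt (fun z : ℝ => m / 2 * z ^ 2) (m * z) z :=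
    ((hasDerivAt_pow 2 z).const_mul (m / 2)).congr_deriv (by ring)
  rw [strongConvexOn_iff_convex]
  simp only [Real.norm_eq_abs, sq_abs]
  refine convexOn_of_hasDerivWithinAt2_nonneg hD
    (fun z _ => ((hg z).sub (hq z)).continuousAt.continuousWithinAt)
    (fun z _ => ((hg z).sub (hq z)).hasDerivWithinAt)
    (fun z _ => ((hg' z).sub ((hasDerivAt_id z).const_mul m)).hasDerivWithinAt)
    (fun z hz => ?_)
  simpa using hm z (interior_subset hz)

lemma logisticLoss_strongConvexOn (y M : ℝ) :
    StrongConvexOn (Icc (-M) M) (1 / (2 + 2 * cosh M)) (logisticLoss y) :=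
  strongConvexOn_of_hasDerivAt2 (convex_Icc _ _) (hasDerivAt_logisticLoss y)
    (fun z => (Real.hasDerivAt_sigmoid z).sub_const y)
    (fun _ hz => sigmoid_mul_one_sub_sigmoid_ge (abs_le.2 hz))

open scoped RealInnerProductSpace

section GeneralizedLinearModel

variable {E ι : Type*} [NormedAddCommGroup E] [InnerProductSpace ℝ E] [Fintype ι]

lemma StrongConvexOn.comp_inner_le {s : Set ℝ} {m : ℝ} {g : ℝ → ℝ} (hg : StrongConvexOn s m g)
    (w : E) {a b : E} (ha : ⟪w, a⟫ ∈ s) (hb : ⟪w, b⟫ ∈ s) {p q : ℝ} (hp : 0 ≤ p) (hq : 0 ≤ q)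
    (hpq : p + q = 1) :
    g ⟪w, p • a + q • b⟫ ≤
      p * g ⟪w, a⟫ + q * g ⟪w, b⟫ - p * q * (m / 2 * ⟪w, a - b⟫ ^ 2) := by
  rw [inner_add_right, real_inner_smul_right, real_inner_smul_right, inner_sub_right]
  simpa [Real.norm_eq_abs, sq_abs] using hg.2 ha hb hp hq hpq

lemma strongConvexOn_sum_comp_inner {s : Set ℝ} {S : Set E} {m κ c : ℝ} {g : ι → ℝ → ℝ}
    (hg : ∀ i, StrongConvexOn s m (g i)) (hm : 0 ≤ m) (hS : Convex ℝ S) (x : ι → E)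
    (hxS : ∀ θ ∈ S, ∀ i, ⟪x i, θ⟫ ∈ s) (hc : 0 ≤ c)
    (hcov : ∀ v, κ * ‖v‖ ^ 2 ≤ c * ∑ i, ⟪x i, v⟫ ^ 2) :
    StrongConvexOn S (κ * m) fun θ => c * ∑ i, g i ⟪x i, θ⟫ := by
  refine ⟨hS, fun a ha b hb p q hp hq hpq => ?_⟩
  calc c * ∑ i, g i ⟪x i, p • a + q • b⟫
      ≤ c * ∑ i, (p * g i ⟪x i, a⟫ + q * g i ⟪x i, b⟫
          - p * q * (m / 2 * ⟪x i, a - b⟫ ^ 2)) := by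
        gcongr with i
        exact (hg i).comp_inner_le (x i) (hxS a ha i) (hxS b hb i) hp hq hpq
    _ = p * (c * ∑ i, g i ⟪x i, a⟫) + q * (c * ∑ i, g i ⟪x i, b⟫)
          - p * q * (m / 2) * (c * ∑ i, ⟪x i, a - b⟫ ^ 2) := by
        simp only [Finset.sum_add_distrib, Finset.sum_sub_distrib, ← Finset.mul_sum]
        ring
    _ ≤ p * (c * ∑ i, g i ⟪x i, a⟫) + q * (c * ∑ i, g i ⟪x i, b⟫)
          - p * q * (m / 2) * (κ * ‖a - b‖ ^ 2) := by
        gcongr _ - _ * ?_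
        exact hcov (a - b)
    _ = _ := by
        simp only [smul_eq_mul]
        ring

end GeneralizedLinearModel

theorem btl_empirical_loss_strongly_convex_general (d N : ℕ)
    (L B κ : ℝ)
    (x : Fin N → EuclideanSpace ℝ (Fin d)) (hx : ∀ i, ‖x i‖ ≤ 2 * L)
    (hcov : ∀ v : EuclideanSpace ℝ (Fin d),
      κ * ‖v‖ ^ 2 ≤ (1 / N) * ∑ i, (inner ℝ (x i) v : ℝ) ^ 2)
    (y : Fin N → ℝ)
    (γ : ℝ) (hγ : γ = 1 / (2 + Real.exp (2 * L * B) + Real.exp (-(2 * L * B))))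
    (f : EuclideanSpace ℝ (Fin d) → ℝ)
    (hf : f = fun θ => -(1 / N) * ∑ i,
      (y i * Real.log (sigmoid (inner ℝ (x i) θ : ℝ)) +
        (1 - y i) * Real.log (1 - sigmoid (inner ℝ (x i) θ : ℝ)))) :
    ∀ a b : EuclideanSpace ℝ (Fin d), ‖a‖ ≤ B → ‖b‖ ≤ B → ∀ t ∈ Set.Icc (0 : ℝ) 1,
      f (t • a + (1 - t) • b) ≤
        t * f a + (1 - t) * f b - κ * γ / 2 * t * (1 - t) * ‖a - b‖ ^ 2 := by
  intro a b ha hb t ⟨ht0, ht1⟩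
  have hlogit : ∀ θ ∈ Metric.closedBall 0 B, ∀ i,
      ⟪x i, θ⟫ ∈ Icc (-(2 * L * B)) (2 * L * B) := fun θ hθ i =>
    abs_le.1 <| (abs_real_inner_le_norm _ _).trans <| mul_le_mul (hx i)
      (mem_closedBall_zero_iff.1 hθ) (norm_nonneg _) ((norm_nonneg _).trans (hx i))
  have hloss : f = fun θ => 1 / N * ∑ i, logisticLoss (y i) ⟪x i, θ⟫ := by
    simp only [hf, ← neg_log_likelihood_eq_logisticLoss, Finset.sum_neg_distrib, neg_mul, mul_neg]
  have hγ' : γ = 1 / (2 + 2 * cosh (2 * L * B)) := by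
    rw [hγ, Real.cosh_eq]
    ring
  have hconv := strongConvexOn_sum_comp_inner (fun i => logisticLoss_strongConvexOn (y i) _)
    (by positivity) (convex_closedBall 0 B) x hlogit (by positivity) hcov
  have hseg := hconv.2 (mem_closedBall_zero_iff.2 ha) (mem_closedBall_zero_iff.2 hb) ht0
    (sub_nonneg.2 ht1) (add_sub_cancel t 1)
  rw [hloss, hγ']
  simp only [smul_eq_mul] at hseg
  linarith

theorem btl_empirical_loss_strongly_convex (d N : ℕ) (hN : 1 ≤ N)
    (L B κ : ℝ) (hL : 0 ≤ L) (hB : 0 ≤ B) (hκ : 0 < κ)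
    (x : Fin N → EuclideanSpace ℝ (Fin d)) (hx : ∀ i, ‖x i‖ ≤ 2 * L)
    (hcov : ∀ v : EuclideanSpace ℝ (Fin d),
      κ * ‖v‖ ^ 2 ≤ (1 / N) * ∑ i, (inner ℝ (x i) v : ℝ) ^ 2)
    (y : Fin N → ℝ) (hy : ∀ i, y i ∈ Set.Icc (0 : ℝ) 1)
    (γ : ℝ) (hγ : γ = 1 / (2 + Real.exp (2 * L * B) + Real.exp (-(2 * L * B))))
    (f : EuclideanSpace ℝ (Fin d) → ℝ)
    (hf : f = fun θ => -(1 / N) * ∑ i,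
      (y i * Real.log (sigmoid (inner ℝ (x i) θ : ℝ)) +
        (1 - y i) * Real.log (1 - sigmoid (inner ℝ (x i) θ : ℝ)))) :
    ∀ a b : EuclideanSpace ℝ (Fin d), ‖a‖ ≤ B → ‖b‖ ≤ B → ∀ t ∈ Set.Icc (0 : ℝ) 1,
      f (t • a + (1 - t) • b) ≤
        t * f a + (1 - t) * f b - κ * γ / 2 * t * (1 - t) * ‖a - b‖ ^ 2 :=
  btl_empirical_loss_strongly_convex_general d N L B κ x hx hcov y γ hγ f hf
end

section
/- Let Σ be a symmetric positive definite d×d real matrix, Θ ⊆ ℝ^d a convex set, μ > 0, and f : ℝ^d → ℝ a differentiable function satisfying f(θ₂) ≥ f(θ₁) + ⟨∇f(θ₁), θ₂ − θ₁⟩ + μ·(θ₂ − θ₁)ᵀ Σ (θ₂ − θ₁) for all θ₁, θ₂ ∈ Θ. If θ̂ ∈ Θ satisfies f(θ̂) ≤ f(θ) for all θ ∈ Θ and θ* ∈ Θ, then μ·√((θ̂ − θ*)ᵀ Σ (θ̂ − θ*)) ≤ √( ∇f(θ*)ᵀ Σ^{−1} ∇f(θ*) ). -/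
/-!
Strong convexity between `θs` and the minimizer `θhat` gives
`μ ‖θhat - θs‖²_Σ ≤ -⟨∇f(θs), θhat - θs⟩`, and the Cauchy–Schwarz inequality for the dual pair
of norms `‖·‖_Σ`, `‖·‖_{Σ⁻¹}` bounds the right-hand side by `‖∇f(θs)‖_{Σ⁻¹} ‖θhat - θs‖_Σ`.
Dividing by `‖θhat - θs‖_Σ` (when it is nonzero) gives the claim.
-/

open Matrix

section

variable {n : Type*} [Fintype n]

theorem Matrix.PosSemidef.dotProduct_mulVec_self_nonneg {A : Matrix n n ℝ} (hA : A.PosSemidef)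
    (x : n → ℝ) : 0 ≤ x ⬝ᵥ A *ᵥ x := by
  simpa using hA.dotProduct_mulVec_nonneg x

theorem Matrix.PosSemidef.dotProduct_mulVec_mul_self_le {A : Matrix n n ℝ} (hA : A.PosSemidef)
    (x y : n → ℝ) :
    (x ⬝ᵥ A *ᵥ y) * (x ⬝ᵥ A *ᵥ y) ≤ (x ⬝ᵥ A *ᵥ x) * (y ⬝ᵥ A *ᵥ y) := by
  let := A.toSeminormedAddCommGroup hA
  let := A.toInnerProductSpace hA
  have h := real_inner_mul_inner_self_le x y
  simp only [dotProduct_comm x, dotProduct_comm y]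
  exact h

theorem Matrix.PosDef.abs_dotProduct_le_sqrt_mul_sqrt [DecidableEq n] {A : Matrix n n ℝ}
    (hA : A.PosDef) (g v : n → ℝ) :
    |g ⬝ᵥ v| ≤ √(g ⬝ᵥ A⁻¹ *ᵥ g) * √(v ⬝ᵥ A *ᵥ v) := by
  have hAinv : A *ᵥ (A⁻¹ *ᵥ g) = g := by
    rw [mulVec_mulVec, mul_nonsing_inv _ ((isUnit_iff_isUnit_det A).1 hA.isUnit), one_mulVec]
  have h := hA.posSemidef.dotProduct_mulVec_mul_self_le v (A⁻¹ *ᵥ g)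
  rw [hAinv, dotProduct_comm v, dotProduct_comm _ g, mul_comm (v ⬝ᵥ _)] at h
  rw [← Real.sqrt_mul' _ (hA.posSemidef.dotProduct_mulVec_self_nonneg v)]
  exact Real.abs_le_sqrt (by simpa only [sq] using h)

end

theorem mul_sqrt_le_sqrt_of_mul_le_sqrt_mul_sqrt {μ a c : ℝ} (hc : 0 ≤ c)
    (h : μ * c ≤ √a * √c) : μ * √c ≤ √a := by
  rcases hc.eq_or_lt with rfl | hc
  · simp
  · have h' : μ * √c * √c ≤ √a * √c := by rwa [mul_assoc, Real.mul_self_sqrt hc.le]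
    exact le_of_mul_le_mul_right h' (Real.sqrt_pos.2 hc)

theorem seminorm_bound_of_minimizer_general (d : ℕ) (Sig : Matrix (Fin d) (Fin d) ℝ)
    (hpd : Sig.PosDef)
    (Θ : Set (EuclideanSpace ℝ (Fin d))) (μ : ℝ)
    (f : EuclideanSpace ℝ (Fin d) → ℝ)
    (hsc : ∀ θ₁ ∈ Θ, ∀ θ₂ ∈ Θ,
      f θ₁ + (inner ℝ (gradient f θ₁) (θ₂ - θ₁) : ℝ) +
        μ * ((θ₂ - θ₁) ⬝ᵥ Sig.mulVec (θ₂ - θ₁)) ≤ f θ₂)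
    (θhat θs : EuclideanSpace ℝ (Fin d)) (hθhat : θhat ∈ Θ) (hθs : θs ∈ Θ)
    (hmin : ∀ θ ∈ Θ, f θhat ≤ f θ) :
    μ * Real.sqrt ((θhat - θs) ⬝ᵥ Sig.mulVec (θhat - θs)) ≤
      Real.sqrt ((gradient f θs : EuclideanSpace ℝ (Fin d)) ⬝ᵥ
        Sig⁻¹.mulVec (gradient f θs : EuclideanSpace ℝ (Fin d))) := by
  simp only [WithLp.ofLp_sub] at hsc ⊢
  set g := WithLp.ofLp (gradient f θs)
  set v := θhat.ofLp - θs.ofLp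
  have hinner : inner ℝ (gradient f θs) (θhat - θs) = g ⬝ᵥ v := by
    rw [EuclideanSpace.inner_eq_star_dotProduct, star_trivial, dotProduct_comm, WithLp.ofLp_sub]
  have hgap : μ * (v ⬝ᵥ Sig *ᵥ v) ≤ -(g ⬝ᵥ v) := by
    linarith [hinner ▸ hsc θs hθs θhat hθhat, hmin θs hθs]
  refine mul_sqrt_le_sqrt_of_mul_le_sqrt_mul_sqrt
    (hpd.posSemidef.dotProduct_mulVec_self_nonneg v) ?_
  calc μ * (v ⬝ᵥ Sig *ᵥ v) ≤ -(g ⬝ᵥ v) := hgap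
    _ ≤ |g ⬝ᵥ v| := neg_le_abs _
    _ ≤ √(g ⬝ᵥ Sig⁻¹ *ᵥ g) * √(v ⬝ᵥ Sig *ᵥ v) := hpd.abs_dotProduct_le_sqrt_mul_sqrt g v

theorem seminorm_bound_of_minimizer (d : ℕ) (Sig : Matrix (Fin d) (Fin d) ℝ)
    (hsymm : Sig.IsSymm) (hpd : Sig.PosDef)
    (Θ : Set (EuclideanSpace ℝ (Fin d))) (hΘ : Convex ℝ Θ) (μ : ℝ) (hμ : 0 < μ)
    (f : EuclideanSpace ℝ (Fin d) → ℝ) (hdiff : Differentiable ℝ f)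
    (hsc : ∀ θ₁ ∈ Θ, ∀ θ₂ ∈ Θ,
      f θ₁ + (inner ℝ (gradient f θ₁) (θ₂ - θ₁) : ℝ) +
        μ * ((θ₂ - θ₁) ⬝ᵥ Sig.mulVec (θ₂ - θ₁)) ≤ f θ₂)
    (θhat θs : EuclideanSpace ℝ (Fin d)) (hθhat : θhat ∈ Θ) (hθs : θs ∈ Θ)
    (hmin : ∀ θ ∈ Θ, f θhat ≤ f θ) :
    μ * Real.sqrt ((θhat - θs) ⬝ᵥ Sig.mulVec (θhat - θs)) ≤
      Real.sqrt ((gradient f θs : EuclideanSpace ℝ (Fin d)) ⬝ᵥ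
        Sig⁻¹.mulVec (gradient f θs : EuclideanSpace ℝ (Fin d))) :=
  seminorm_bound_of_minimizer_general d Sig hpd Θ μ f hsc θhat θs hθhat hθs hmin
end
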